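/- Change of variables for generalized analytic functions: let Z : T → D be a holomorphic bijection between open subsets of ℂ with nonvanishing derivative, and suppose ψ satisfies ∂_z̄ ψ = u·conj(ψ) on D. Define u_*(τ) = u(Z(τ))·|Z'(τ)| and ψ_*(τ) = ψ(Z(τ))·√(Z'(τ)) (for some continuous branch of the square root). Then ∂_τ̄ ψ_* = u_*·conj(ψ_*) on T. -/

import Mathlib

/-!
A continuous square root `s` of the nonvanishing holomorphic function `Z'` is itself holomorphic:
near `s τ` the map `w ↦ w ²` has a holomorphic local inverse, and `s` is that inverse composed
with `Z'`. Hence `∂_τ̄ (s · ψ ∘ Z) = s · conj Z' · (∂_z̄ ψ) ∘ Z = s · conj (s ²) · u · conj ψ`,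
and `s · conj s = |Z'|`.
-/

open Complex ComplexConjugate

/-- Wirtinger derivative ∂_z̄ = (∂_x + i ∂_y)/2. -/
noncomputable def dzbar (f : ℂ → ℂ) (z : ℂ) : ℂ :=
  (fderiv ℝ f z 1 + Complex.I * fderiv ℝ f z Complex.I) / 2

open Filter Topology

theorem DifferentiableAt.of_pow_eq {𝕜 : Type*} [NontriviallyNormedField 𝕜] [CompleteSpace 𝕜]
    {f s : 𝕜 → 𝕜} {x : 𝕜} {n : ℕ} (hf : DifferentiableAt 𝕜 f x) (hs : ContinuousAt s x)
    (hpow : ∀ᶠ y in 𝓝 x, s y ^ n = f y) (hn : (n : 𝕜) * s x ^ (n - 1) ≠ 0) :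
    DifferentiableAt 𝕜 s x := by
  have hp := hasStrictDerivAt_pow n (s x)
  have hinv : DifferentiableAt 𝕜 (hp.localInverse _ _ _ hn) (f x) := by
    simpa only [hpow.self_of_nhds] using (hp.to_localInverse hn).hasDerivAt.differentiableAt
  have hs_eq : hp.localInverse _ _ _ hn ∘ f =ᶠ[𝓝 x] s := by
    filter_upwards [Tendsto.eventually hs (hp.eventually_left_inverse hn), hpow] with y hy hy'
    rw [Function.comp_apply, ← hy', hy]
  exact (hinv.comp x hf).congr_of_eventuallyEq hs_eq.symm

lemma fderiv_real_apply_of_differentiableAt {f : ℂ → ℂ} {z : ℂ} (hf : DifferentiableAt ℂ f z)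
    (v : ℂ) : fderiv ℝ f z v = deriv f z * v := by
  rw [(hf.hasDerivAt.hasFDerivAt.restrictScalars ℝ).fderiv]
  simp [mul_comm]

lemma dzbar_eq_zero_of_differentiableAt {f : ℂ → ℂ} {z : ℂ} (hf : DifferentiableAt ℂ f z) :
    dzbar f z = 0 := by
  simp only [dzbar, fderiv_real_apply_of_differentiableAt hf]
  linear_combination (deriv f z / 2) * I_sq

lemma dzbar_mul {f g : ℂ → ℂ} {z : ℂ} (hf : DifferentiableAt ℝ f z)
    (hg : DifferentiableAt ℝ g z) :
    dzbar (fun w => f w * g w) z = f z * dzbar g z + g z * dzbar f z := by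
  simp only [dzbar, fderiv_fun_mul hf hg, add_apply, smul_apply, smul_eq_mul]
  ring

lemma ContinuousLinearMap.apply_add_I_mul_apply_mul_I (L : ℂ →L[ℝ] ℂ) (c : ℂ) :
    L c + I * L (c * I) = conj c * (L 1 + I * L I) := by
  have hL : ∀ v : ℂ, L v = v.re * L 1 + v.im * L I := fun v => by
    conv_lhs => rw [← re_add_im v, ← real_smul, ← mul_one (v.re : ℂ), ← real_smul, map_add,
      map_smul, map_smul, real_smul, real_smul]
  rw [hL c, hL (c * I), RCLike.conj_eq_re_sub_im (K := ℂ), mul_I_re, mul_I_im, ofReal_neg]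
  linear_combination (c.im * L I) * I_sq

lemma dzbar_comp_of_differentiableAt {ψ Z : ℂ → ℂ} {z : ℂ} (hZ : DifferentiableAt ℂ Z z)
    (hψ : DifferentiableAt ℝ ψ (Z z)) :
    dzbar (fun w => ψ (Z w)) z = conj (deriv Z z) * dzbar ψ (Z z) := by
  rw [dzbar, dzbar, ← Function.comp_def, fderiv_comp z hψ (hZ.restrictScalars ℝ)]
  simp only [ContinuousLinearMap.comp_apply, fderiv_real_apply_of_differentiableAt hZ, mul_one,
    ContinuousLinearMap.apply_add_I_mul_apply_mul_I, mul_div_assoc]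

/-- holomorphic change of variables for generalized analytic
functions. -/
theorem change_of_variables_generalized_analytic
    (T D : Set ℂ) (hT : IsOpen T) (hD : IsOpen D)
    (Z : ℂ → ℂ) (hZhol : DifferentiableOn ℂ Z T)
    (hZbij : Set.BijOn Z T D)
    (hZ' : ∀ τ ∈ T, deriv Z τ ≠ 0)
    (s : ℂ → ℂ) (hs : ContinuousOn s T)
    (hssq : ∀ τ ∈ T, s τ ^ 2 = deriv Z τ)
    (u ψ : ℂ → ℂ) (hψC : ContDiffOn ℝ 1 ψ D)
    (hψ : ∀ z ∈ D, dzbar ψ z = u z * conj (ψ z)) :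
    ∀ τ ∈ T, dzbar (fun σ => ψ (Z σ) * s σ) τ =
      (u (Z τ) * ((‖deriv Z τ‖ : ℝ) : ℂ)) * conj (ψ (Z τ) * s τ) := by
  intro τ hτ
  have hTτ : T ∈ 𝓝 τ := hT.mem_nhds hτ
  have hZτ : DifferentiableAt ℂ Z τ := hZhol.differentiableAt hTτ
  have hZτD : Z τ ∈ D := hZbij.mapsTo hτ
  have hψZτ : DifferentiableAt ℝ ψ (Z τ) :=
    (hψC.contDiffAt (hD.mem_nhds hZτD)).differentiableAt one_ne_zero
  have hsτ : s τ ≠ 0 := fun h => hZ' τ hτ (by rw [← hssq τ hτ, h, zero_pow two_ne_zero])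
  have hsd : DifferentiableAt ℂ s τ :=
    .of_pow_eq ((hZhol.deriv hT).differentiableAt hTτ) (hs.continuousAt hTτ)
      (eventually_of_mem hTτ hssq) (by simpa using hsτ)
  rw [dzbar_mul (f := fun σ => ψ (Z σ)) (hψZτ.comp τ (hZτ.restrictScalars ℝ))
      (hsd.restrictScalars ℝ),
    dzbar_eq_zero_of_differentiableAt hsd, dzbar_comp_of_differentiableAt hZτ hψZτ, hψ _ hZτD,
    ← hssq τ hτ, norm_pow, ofReal_pow, ← mul_conj', map_mul, map_pow]
  ring
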